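/- Let r₁, λ, ψ, u, c > 0. Let ξ_L := (−1 + √(1+8r₁/ψ²))/2, v_L := u + c − r₁c/(ξ_L ψ²), κ_L := r₁c²/(2ψ²), ξ_R := (−1 − √(1+8(r₁+λ)/ψ²))/2, and v_R := r₁(u+c)/(r₁+λ) − r₁c/(ξ_R ψ²). Define, for x ∈ [v_R, v_L], a₋*(x) := 1 − [(√(2r₁)/ψ)·φ((x − u)/√κ_L)] / [(√(2r₁)/ψ)·φ((v_L − u)/√κ_L) + Φ((v_L − u)/√κ_L) − Φ((x − u)/√κ_L)]. If v_R < v_L, then the denominator in this definition is strictly positive for every x ∈ [v_R, v_L], a₋* is strictly decreasing on [v_R, v_L], a₋*(v_L) = 0, and 0 < a₋*(v_R) < 1. -/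

import Mathlib

/-- The standard normal density φ(x) = exp(−x²/2)/√(2π). -/
noncomputable def normPdf (x : ℝ) : ℝ := Real.exp (-(x ^ 2) / 2) / Real.sqrt (2 * Real.pi)

/-- The standard normal CDF Φ(x) = ∫_{−∞}^{x} φ(t) dt. -/
noncomputable def normCdf (x : ℝ) : ℝ := ∫ t in Set.Iic x, normPdf t

open MeasureTheory Set

/-
The substitution T = (x - u)/√κ_L turns a₋* into 1 - A φ(T)/(K - Φ(T)) with A = √(2r₁)/ψ and
K = A φ(t₀) + Φ(t₀), t₀ = (v_L - u)/√κ_L. The quotient φ/(K - Φ) has derivative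
φ·g/(K - Φ)² with g(T) = φ(T) - T (K - Φ(T)); since g' = -(K - Φ) < 0, g is positive left of t₀
as soon as g(t₀) = φ(t₀)(1 - A t₀) is. Finally A t₀ = 1 - ξ_L < 1 because ξ_L² + ξ_L = 2r₁/ψ².
-/

lemma normPdf_pos (x : ℝ) : 0 < normPdf x :=
  div_pos (Real.exp_pos _) (Real.sqrt_pos.mpr (by positivity))

lemma continuous_normPdf : Continuous normPdf := by
  unfold normPdf; fun_prop

lemma integrable_normPdf : Integrable normPdf := by
  have h : normPdf = fun x => Real.exp (-(1 / 2 : ℝ) * x ^ 2) / Real.sqrt (2 * Real.pi) := by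
    funext x; simp only [normPdf]; ring_nf
  rw [h]
  exact (integrable_exp_neg_mul_sq (by norm_num)).div_const _

lemma hasDerivAt_normPdf (x : ℝ) : HasDerivAt normPdf (-x * normPdf x) x := by
  refine ((((hasDerivAt_pow 2 x).neg.div_const 2).exp).div_const _).congr_deriv ?_
  simp only [normPdf, Pi.neg_apply]; ring

lemma hasDerivAt_normCdf (x : ℝ) : HasDerivAt normCdf (normPdf x) x := by
  have hsplit : ∀ y, normCdf 0 + ∫ t in (0 : ℝ)..y, normPdf t = normCdf y := fun y => by
    rw [normCdf, normCdf, ← intervalIntegral.integral_Iic_sub_Iic integrable_normPdf.integrableOn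
      integrable_normPdf.integrableOn]
    ring
  have hFTC : HasDerivAt (fun y => ∫ t in (0 : ℝ)..y, normPdf t) (normPdf x) x :=
    intervalIntegral.integral_hasDerivAt_right (continuous_normPdf.intervalIntegrable _ _)
      (continuous_normPdf.stronglyMeasurableAtFilter _ _) continuous_normPdf.continuousAt
  simpa only [hsplit] using hFTC.const_add (normCdf 0)

lemma normCdf_mono : Monotone normCdf := fun _ _ hab =>
  setIntegral_mono_set integrable_normPdf.integrableOn
    (Filter.Eventually.of_forall fun x => (normPdf_pos x).le)
    (Iic_subset_Iic.mpr hab).eventuallyLE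

lemma hasDerivAt_normPdf_sub_mul (K T : ℝ) :
    HasDerivAt (fun T => normPdf T - T * (K - normCdf T)) (-(K - normCdf T)) T := by
  refine ((hasDerivAt_normPdf T).sub ((hasDerivAt_id' T).mul
    ((hasDerivAt_normCdf T).const_sub K))).congr_deriv ?_
  ring

section MillsRatio

variable {K t₀ : ℝ}

lemma normPdf_sub_mul_pos (hK : normCdf t₀ < K) (h₀ : 0 < normPdf t₀ - t₀ * (K - normCdf t₀))
    {T : ℝ} (hT : T ≤ t₀) : 0 < normPdf T - T * (K - normCdf T) := by
  have hanti : AntitoneOn (fun T => normPdf T - T * (K - normCdf T)) (Iic t₀) := by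
    refine antitoneOn_of_hasDerivWithinAt_nonpos (convex_Iic t₀)
      (fun T _ => (hasDerivAt_normPdf_sub_mul K T).continuousAt.continuousWithinAt)
      (fun T _ => (hasDerivAt_normPdf_sub_mul K T).hasDerivWithinAt) fun T hT => ?_
    rw [interior_Iic] at hT
    linarith [normCdf_mono hT.le]
  exact h₀.trans_le (hanti hT self_mem_Iic hT)

lemma hasDerivAt_normPdf_div {T : ℝ} (hT : normCdf T ≠ K) :
    HasDerivAt (fun T => normPdf T / (K - normCdf T))
      (normPdf T * (normPdf T - T * (K - normCdf T)) / (K - normCdf T) ^ 2) T := by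
  refine ((hasDerivAt_normPdf T).div ((hasDerivAt_normCdf T).const_sub K)
    (sub_ne_zero.mpr hT.symm)).congr_deriv ?_
  ring

lemma strictMonoOn_normPdf_div (hK : normCdf t₀ < K)
    (h₀ : 0 < normPdf t₀ - t₀ * (K - normCdf t₀)) :
    StrictMonoOn (fun T => normPdf T / (K - normCdf T)) (Iic t₀) := by
  have hΦ : ∀ T ∈ Iic t₀, normCdf T < K := fun T hT => (normCdf_mono hT).trans_lt hK
  refine strictMonoOn_of_hasDerivWithinAt_pos (convex_Iic t₀)
    (fun T hT => (hasDerivAt_normPdf_div (hΦ T hT).ne).continuousAt.continuousWithinAt)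
    (fun T hT => (hasDerivAt_normPdf_div (hΦ T (interior_subset hT)).ne).hasDerivWithinAt)
    fun T hT => ?_
  have hT : T ≤ t₀ := interior_subset (s := Iic t₀) hT
  have hden : 0 < K - normCdf T := sub_pos.mpr (hΦ T hT)
  exact div_pos (mul_pos (normPdf_pos T) (normPdf_sub_mul_pos hK h₀ hT)) (pow_pos hden 2)

end MillsRatio

section Aminus

variable {A t₀ : ℝ}

lemma mul_normPdf_add_normCdf_sub_pos (hA : 0 < A) {T : ℝ} (hT : T ≤ t₀) :
    0 < A * normPdf t₀ + normCdf t₀ - normCdf T := by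
  linarith [mul_pos hA (normPdf_pos t₀), normCdf_mono hT]

lemma strictAntiOn_one_sub_mul_normPdf_div (hA : 0 < A) (ht₀ : A * t₀ < 1) :
    StrictAntiOn (fun T => 1 - A * normPdf T / (A * normPdf t₀ + normCdf t₀ - normCdf T))
      (Iic t₀) := by
  have hK : normCdf t₀ < A * normPdf t₀ + normCdf t₀ := by
    linarith [mul_pos hA (normPdf_pos t₀)]
  have h₀ : 0 < normPdf t₀ - t₀ * (A * normPdf t₀ + normCdf t₀ - normCdf t₀) := by
    rw [add_sub_cancel_right, show normPdf t₀ - t₀ * (A * normPdf t₀)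
      = normPdf t₀ * (1 - A * t₀) by ring]
    exact mul_pos (normPdf_pos t₀) (sub_pos.mpr ht₀)
  intro S hS T hT hST
  have := strictMonoOn_normPdf_div hK h₀ hS hT hST
  simp only [mul_div_assoc]
  linarith [mul_lt_mul_of_pos_left this hA]

end Aminus

lemma quadratic_posRoot_spec {a : ℝ} (ha : 0 < a) :
    0 < (-1 + Real.sqrt (1 + 4 * a)) / 2 ∧
      ((-1 + Real.sqrt (1 + 4 * a)) / 2) ^ 2 + (-1 + Real.sqrt (1 + 4 * a)) / 2 = a := by
  have hsq : Real.sqrt (1 + 4 * a) ^ 2 = 1 + 4 * a := Real.sq_sqrt (by positivity)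
  have hgt : 1 < Real.sqrt (1 + 4 * a) := (Real.lt_sqrt zero_le_one).mpr (by linarith)
  exact ⟨by linarith, by linear_combination hsq / 4⟩

lemma sqrt_mul_sq_div_two_mul_sq {r ψ c : ℝ} (hr : 0 ≤ r) (hψ : 0 < ψ) (hc : 0 ≤ c) :
    Real.sqrt (r * c ^ 2 / (2 * ψ ^ 2)) = Real.sqrt (2 * r) / ψ * c / 2 := by
  rw [← Real.sqrt_sq (by positivity : 0 ≤ Real.sqrt (2 * r) / ψ * c / 2), div_pow, mul_pow, div_pow,
    Real.sq_sqrt (by positivity : 0 ≤ 2 * r)]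
  congr 1
  field_simp

lemma sqrt_two_mul_div_mul_sub_div_lt_one {r ψ c ξ : ℝ} (hr : 0 < r) (hψ : 0 < ψ) (hc : 0 < c)
    (hξ : ξ = (-1 + Real.sqrt (1 + 8 * r / ψ ^ 2)) / 2) :
    Real.sqrt (2 * r) / ψ * ((c - r * c / (ξ * ψ ^ 2)) / Real.sqrt (r * c ^ 2 / (2 * ψ ^ 2)))
      < 1 := by
  obtain ⟨hξpos, hξsq⟩ := quadratic_posRoot_spec (a := 2 * r / ψ ^ 2) (by positivity)
  rw [show 4 * (2 * r / ψ ^ 2) = 8 * r / ψ ^ 2 by ring, ← hξ] at hξpos hξsq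
  rw [eq_div_iff (by positivity)] at hξsq
  suffices Real.sqrt (2 * r) / ψ * ((c - r * c / (ξ * ψ ^ 2)) / Real.sqrt (r * c ^ 2 / (2 * ψ ^ 2)))
      = 1 - ξ by linarith
  rw [sqrt_mul_sq_div_two_mul_sq hr.le hψ hc.le]
  field_simp
  linear_combination hξsq

theorem aminus_properties_general (r₁ ψ u c ξL vL κL vR : ℝ)
    (hr : 0 < r₁) (hψ : 0 < ψ) (hc : 0 < c)
    (hξL : ξL = (-1 + Real.sqrt (1 + 8 * r₁ / ψ ^ 2)) / 2)
    (hvL : vL = u + c - r₁ * c / (ξL * ψ ^ 2))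
    (hκL : κL = r₁ * c ^ 2 / (2 * ψ ^ 2))
    (aminus : ℝ → ℝ)
    (haminus : ∀ x, aminus x = 1 -
      ((Real.sqrt (2 * r₁) / ψ) * normPdf ((x - u) / Real.sqrt κL)) /
        ((Real.sqrt (2 * r₁) / ψ) * normPdf ((vL - u) / Real.sqrt κL)
          + normCdf ((vL - u) / Real.sqrt κL)
          - normCdf ((x - u) / Real.sqrt κL)))
    (hvRL : vR < vL) :
    (∀ x ∈ Set.Icc vR vL,
      0 < (Real.sqrt (2 * r₁) / ψ) * normPdf ((vL - u) / Real.sqrt κL)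
          + normCdf ((vL - u) / Real.sqrt κL)
          - normCdf ((x - u) / Real.sqrt κL)) ∧
    StrictAntiOn aminus (Set.Icc vR vL) ∧
    aminus vL = 0 ∧ 0 < aminus vR ∧ aminus vR < 1 := by
  set A := Real.sqrt (2 * r₁) / ψ
  have hA : 0 < A := by positivity
  set T := fun x => (x - u) / Real.sqrt κL
  have hT : StrictMono T := fun x y hxy =>
    div_lt_div_of_pos_right (by linarith) (Real.sqrt_pos.mpr (by rw [hκL]; positivity))
  have hAt₀ : A * T vL < 1 := by
    have hvLu : vL - u = c - r₁ * c / (ξL * ψ ^ 2) := by rw [hvL]; ring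
    simpa only [T, hvLu, hκL] using sqrt_two_mul_div_mul_sub_div_lt_one hr hψ hc hξL
  have hmaps : MapsTo T (Icc vR vL) (Iic (T vL)) := fun x hx => hT.monotone hx.2
  have hden : ∀ x ∈ Icc vR vL, 0 < A * normPdf (T vL) + normCdf (T vL) - normCdf (T x) :=
    fun x hx => mul_normPdf_add_normCdf_sub_pos hA (hmaps hx)
  have hanti : StrictAntiOn aminus (Icc vR vL) := by
    rw [show aminus = (fun S => 1 - A * normPdf S /
        (A * normPdf (T vL) + normCdf (T vL) - normCdf S)) ∘ T from funext haminus]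
    exact (strictAntiOn_one_sub_mul_normPdf_div hA hAt₀).comp_strictMonoOn (hT.strictMonoOn _)
      hmaps
  have hvL0 : aminus vL = 0 := by
    rw [haminus, add_sub_cancel_right, div_self (mul_pos hA (normPdf_pos _)).ne', sub_self]
  have hvR_mem : vR ∈ Icc vR vL := left_mem_Icc.mpr hvRL.le
  refine ⟨hden, hanti, hvL0, ?_, ?_⟩
  · simpa [hvL0] using hanti hvR_mem (right_mem_Icc.mpr hvRL.le) hvRL
  · rw [haminus]
    linarith [div_pos (mul_pos hA (normPdf_pos (T vR))) (hden vR hvR_mem)]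

/-- Properties of the function a₋* on [v_R, v_L]: the denominator is
strictly positive, a₋* is strictly decreasing, a₋*(v_L) = 0, and 0 < a₋*(v_R) < 1. -/
theorem aminus_properties (r₁ lam ψ u c ξL vL κL ξR vR : ℝ)
    (hr : 0 < r₁) (hlam : 0 < lam) (hψ : 0 < ψ) (hu : 0 < u) (hc : 0 < c)
    (hξL : ξL = (-1 + Real.sqrt (1 + 8 * r₁ / ψ ^ 2)) / 2)
    (hvL : vL = u + c - r₁ * c / (ξL * ψ ^ 2))
    (hκL : κL = r₁ * c ^ 2 / (2 * ψ ^ 2))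
    (hξR : ξR = (-1 - Real.sqrt (1 + 8 * (r₁ + lam) / ψ ^ 2)) / 2)
    (hvR : vR = r₁ * (u + c) / (r₁ + lam) - r₁ * c / (ξR * ψ ^ 2))
    (aminus : ℝ → ℝ)
    (haminus : ∀ x, aminus x = 1 -
      ((Real.sqrt (2 * r₁) / ψ) * normPdf ((x - u) / Real.sqrt κL)) /
        ((Real.sqrt (2 * r₁) / ψ) * normPdf ((vL - u) / Real.sqrt κL)
          + normCdf ((vL - u) / Real.sqrt κL)
          - normCdf ((x - u) / Real.sqrt κL)))
    (hvRL : vR < vL) :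
    (∀ x ∈ Set.Icc vR vL,
      0 < (Real.sqrt (2 * r₁) / ψ) * normPdf ((vL - u) / Real.sqrt κL)
          + normCdf ((vL - u) / Real.sqrt κL)
          - normCdf ((x - u) / Real.sqrt κL)) ∧
    StrictAntiOn aminus (Set.Icc vR vL) ∧
    aminus vL = 0 ∧ 0 < aminus vR ∧ aminus vR < 1 :=
  aminus_properties_general r₁ ψ u c ξL vL κL vR hr hψ hc hξL hvL hκL aminus haminus hvRL
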